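/- arXiv:2307.04267 — 3 statements merged into one kernel-verified Lean document; each statement's English description precedes it below -/
import Mathlib

section
/- For two adjacent sites i and j, the following operator identity holds on (ℂ²)^{⊗4} ⊗ (ℂ²)^{⊗4}: Σ_{a,b=1}^{4} (-1)^{a+b} (Σ_{α∈{x,y,z}} τ_{i,a}^α τ_{i,b}^α)(Σ_{β∈{x,y,z}} τ_{j,a}^β τ_{j,b}^β) = Σ_{α,β∈{x,y,z}} ( Σ_{a=1}^{4} (-1)^{a} τ_{i,a}^α τ_{j,a}^β )², so that each local term of the effective Hamiltonian is a sum of squares of Hermitian operators. -/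
/-! STATEMENT 1: the two-site local term of the effective Hamiltonian is a sum of squares of Hermitian operators. -/

open Matrix Finset

noncomputable section

/-- The Pauli matrices σ^x, σ^y, σ^z. -/
def pauli : Fin 3 → Matrix (Fin 2) (Fin 2) ℂ
  | 0 => !![0, 1; 1, 0]
  | 1 => !![0, -Complex.I; Complex.I, 0]
  | 2 => !![1, 0; 0, -1]

/-- The single-contour matrix: the Pauli matrix `σ^α` on forward contours `a = 1, 3`
(indices `0, 2`), and its entrywise complex conjugate `(σ^α)^*` on backward contours
`a = 2, 4` (indices `1, 3`). -/
def pauliC (a : Fin 4) (α : Fin 3) : Matrix (Fin 2) (Fin 2) ℂ :=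
  if a = 0 ∨ a = 2 then pauli α else (pauli α).map (starRingEnd ℂ)

/-- Basis of the replica Hilbert space ((ℂ²)^{⊗4})^{⊗N}: a site index `i : Fin N` and a
contour index `a : Fin 4` give a qubit. -/
abbrev RepIdx (N : ℕ) := Fin N → Fin 4 → Fin 2

/-- `τ_{i,a}^α`: acts as `pauliC a α` on contour `a` of site `i`, identity elsewhere. -/
def tau (N : ℕ) (i : Fin N) (a : Fin 4) (α : Fin 3) :
    Matrix (RepIdx N) (RepIdx N) ℂ :=
  Matrix.of fun f g =>
    pauliC a α (f i a) (g i a) *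
      ∏ p ∈ (univ : Finset (Fin N × Fin 4)).erase (i, a),
        if f p.1 p.2 = g p.1 p.2 then (1 : ℂ) else 0

/-- The effective Hamiltonian
`H_eff = (J/2) Σ_{i=1}^{N-1} Σ_{a,b} (-1)^{a+b} (Σ_α τ_{i,a}^α τ_{i,b}^α)(Σ_β τ_{i+1,a}^β τ_{i+1,b}^β)`
on the open chain of `N` sites. -/
def Heff (N : ℕ) (J : ℝ) : Matrix (RepIdx N) (RepIdx N) ℂ :=
  ((J : ℂ) / 2) • ∑ i : Fin N,
    if h : (i : ℕ) + 1 < N then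
      ∑ a : Fin 4, ∑ b : Fin 4, ((-1 : ℂ) ^ ((a : ℕ) + (b : ℕ))) •
        ((∑ α : Fin 3, tau N i a α * tau N i b α) *
         (∑ β : Fin 3, tau N ⟨(i : ℕ) + 1, h⟩ a β * tau N ⟨(i : ℕ) + 1, h⟩ b β))
    else 0

/-- The single-site state |id⟩⟩ = ½(|0000⟩+|0011⟩+|1100⟩+|1111⟩). -/
def idS : (Fin 4 → Fin 2) → ℂ := fun f => if f 0 = f 1 ∧ f 2 = f 3 then 1 / 2 else 0

/-- The single-site state |swap⟩⟩ = ½(|0000⟩+|1001⟩+|0110⟩+|1111⟩). -/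
def swapS : (Fin 4 → Fin 2) → ℂ := fun f => if f 0 = f 3 ∧ f 1 = f 2 then 1 / 2 else 0

/-- The product state |id⟩⟩^{⊗N}. -/
def idN (N : ℕ) : RepIdx N → ℂ := fun f => ∏ i : Fin N, idS (f i)

/-- The product state |swap⟩⟩^{⊗N}. -/
def swapN (N : ℕ) : RepIdx N → ℂ := fun f => ∏ i : Fin N, swapS (f i)

/-!
All operators `τ_{i,a}^α` are Hermitian, and two of them commute as soon as they act on
different qubits `(i, a) ≠ (j, b)`: each is a single-qubit operator tensored with the identity.
Hence `(τ_{i,a}^α τ_{i,b}^α)(τ_{j,a}^β τ_{j,b}^β) = (τ_{i,a}^α τ_{j,a}^β)(τ_{i,b}^α τ_{j,b}^β)`, and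
splitting `(-1)^{a+b} = (-1)^a (-1)^b` turns the double sum over `a, b` into a sum of squares.
Each `τ_{i,a}^α τ_{j,a}^β` is a product of commuting Hermitian operators, hence Hermitian.
-/

section LocalOperator

variable {Q S R : Type*} [Fintype Q] [DecidableEq Q] [DecidableEq S]

/-- `M` acting on the factor `q` of `⨂_{p : Q} R^S`, in the product basis indexed by `Q → S`. -/
def localOp [Semiring R] (q : Q) (M : Matrix S S R) : Matrix (Q → S) (Q → S) R :=
  of fun f g => M (f q) (g q) * if ∀ p, p ≠ q → f p = g p then 1 else 0

theorem localOp_mul_localOp_apply [Fintype S] [CommSemiring R] {p q : Q} (hpq : p ≠ q)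
    (M M' : Matrix S S R) (f g : Q → S) :
    (localOp p M * localOp q M') f g =
      M (f p) (g p) * M' (f q) (g q) * if ∀ r, r ≠ p → r ≠ q → f r = g r then 1 else 0 := by
  -- the only intermediate basis state contributing to the matrix product
  rw [mul_apply, Finset.sum_eq_single (Function.update f p (g p))]
  · simp only [localOp, of_apply, Function.update_self, Function.update_of_ne hpq.symm]
    have hfp : ∀ r, r ≠ p → f r = Function.update f p (g p) r := fun r hr =>
      (Function.update_of_ne hr _ _).symm
    have hpg : (∀ r, r ≠ q → Function.update f p (g p) r = g r) ↔
        ∀ r, r ≠ p → r ≠ q → f r = g r := by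
      refine forall_congr' fun r => ?_
      by_cases hr : r = p
      · subst hr; simp [hpq]
      · simp [hr]
    simp only [if_pos hfp, hpg]
    ring
  · intro h _ hh
    simp only [localOp, of_apply]
    split_ifs with hfh hhg
    · refine absurd (funext fun r => ?_) hh
      by_cases hr : r = p
      · subst hr; simpa using hhg r hpq
      · simp [Function.update_of_ne hr, hfh r hr]
    all_goals simp
  · simp

theorem commute_localOp [Fintype S] [CommSemiring R] {p q : Q} (hpq : p ≠ q)
    (M M' : Matrix S S R) : Commute (localOp p M) (localOp q M') := by
  ext f g
  rw [localOp_mul_localOp_apply hpq, localOp_mul_localOp_apply hpq.symm]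
  simp only [Imp.swap (a := _ ≠ p)]
  ring

theorem isHermitian_localOp [CommSemiring R] [StarRing R] {M : Matrix S S R}
    (hM : M.IsHermitian) (q : Q) : (localOp q M).IsHermitian := by
  refine Matrix.ext fun f g => ?_
  simp only [localOp, conjTranspose_apply, of_apply, star_mul']
  rw [← conjTranspose_apply, hM.eq]
  simp only [eq_comm]
  split_ifs <;> simp

end LocalOperator

theorem tau_eq_reindex_localOp (N : ℕ) (i : Fin N) (a : Fin 4) (α : Fin 3) :
    tau N i a α =
      reindex (Equiv.curry _ _ _) (Equiv.curry _ _ _) (localOp (i, a) (pauliC a α)) := by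
  ext f g
  simp only [tau, localOp, reindex_apply, submatrix_apply, of_apply, Equiv.curry_symm_apply,
    Function.uncurry_apply_pair, prod_boole, mem_erase, mem_univ, and_true, ne_eq, Prod.forall,
    Prod.mk.injEq, not_and, mul_ite, mul_one, mul_zero]
  congr

theorem isHermitian_pauliC (a : Fin 4) (α : Fin 3) : (pauliC a α).IsHermitian := by
  have hσ : (pauli α).IsHermitian := by
    fin_cases α <;> exact Matrix.ext fun x y => by
      fin_cases x <;> fin_cases y <;> simp [pauli, conjTranspose_apply]
  unfold pauliC
  split_ifs
  · exact hσ
  · exact hσ.map _ fun _ => rfl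

theorem isHermitian_tau (N : ℕ) (i : Fin N) (a : Fin 4) (α : Fin 3) :
    (tau N i a α).IsHermitian := by
  rw [tau_eq_reindex_localOp]
  exact (isHermitian_localOp (isHermitian_pauliC a α) _).submatrix _

theorem commute_tau {N : ℕ} {i j : Fin N} {a b : Fin 4} (h : (i, a) ≠ (j, b)) (α β : Fin 3) :
    Commute (tau N i a α) (tau N j b β) := by
  rw [tau_eq_reindex_localOp, tau_eq_reindex_localOp]
  exact (commute_localOp h _ _).map (reindexRingEquiv ℂ _)

theorem sum_smul_mul_sum_mul_sum_eq_sum_sq {R A ι κ μ : Type*} [CommSemiring R] [Semiring A]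
    [Algebra R A] [Fintype ι] [Fintype κ] [Fintype μ] (c : ι → R) (X : ι → κ → A)
    (Y : ι → μ → A) (hXY : ∀ a b α β, Commute (X a α) (Y b β)) :
    ∑ a, ∑ b, (c a * c b) • ((∑ α, X a α * X b α) * ∑ β, Y a β * Y b β) =
      ∑ α, ∑ β, (∑ a, c a • (X a α * Y a β)) ^ 2 := by
  calc _ = ∑ a, ∑ b, ∑ α, ∑ β, (c a * c b) • (X a α * Y a β * (X b α * Y b β)) := by
        simp only [Finset.sum_mul_sum, Finset.smul_sum, mul_assoc, (hXY _ _ _ _).left_comm]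
    _ = ∑ α, ∑ β, ∑ a, ∑ b, (c a * c b) • (X a α * Y a β * (X b α * Y b β)) := by
        simp_rw [Finset.sum_comm (s := (univ : Finset ι)) (t := (univ : Finset κ)),
          Finset.sum_comm (s := (univ : Finset ι)) (t := (univ : Finset μ))]
    _ = _ := by simp only [sq, Finset.sum_mul_sum, smul_mul_smul_comm]

/-- Contours `a = 1, …, 4` are indexed by `Fin 4`, so the paper's `(-1)^a` is
`(-1)^((a : ℕ) + 1)`. -/
theorem stmt1 :
    (∑ a : Fin 4, ∑ b : Fin 4, ((-1 : ℂ) ^ ((a : ℕ) + (b : ℕ))) •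
        ((∑ α : Fin 3, tau 2 0 a α * tau 2 0 b α) *
         (∑ β : Fin 3, tau 2 1 a β * tau 2 1 b β)) =
      ∑ α : Fin 3, ∑ β : Fin 3,
        (∑ a : Fin 4, ((-1 : ℂ) ^ ((a : ℕ) + 1)) • (tau 2 0 a α * tau 2 1 a β)) ^ 2) ∧
    ∀ α β : Fin 3,
      (∑ a : Fin 4, ((-1 : ℂ) ^ ((a : ℕ) + 1)) • (tau 2 0 a α * tau 2 1 a β)).IsHermitian := by
  have hsign (a b : Fin 4) : (-1 : ℂ) ^ ((a : ℕ) + (b : ℕ)) =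
      (-1) ^ ((a : ℕ) + 1) * (-1) ^ ((b : ℕ) + 1) := by ring
  have hcomm (a b : Fin 4) (α β : Fin 3) : Commute (tau 2 0 a α) (tau 2 1 b β) :=
    commute_tau (by simp) α β
  refine ⟨?_, fun α β => ?_⟩
  · simp only [hsign]
    exact sum_smul_mul_sum_mul_sum_eq_sum_sq _ _ _ hcomm
  · refine isSelfAdjoint_sum _ fun a _ => ((IsSelfAdjoint.one ℂ).neg.pow _).smul ?_
    exact ((isHermitian_tau 2 0 a α).isSelfAdjoint.commute_iff
      (isHermitian_tau 2 1 a β).isSelfAdjoint).mp (hcomm a a α β)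
end
end

section
/- The product state |id⟩⟩^{⊗N} is a zero-energy ground state of the effective Hamiltonian: H_eff (|id⟩⟩^{⊗N}) = 0. -/
/-!
STATEMENT 3: The product state |id⟩⟩^{⊗N} is a zero-energy ground state of the
effective Hamiltonian: H_eff (|id⟩⟩^{⊗N}) = 0.
-/

open Matrix Finset

noncomputable section

/-!
`|id⟩⟩` is a product of two Bell pairs, on contours (1,2) and (3,4) (indices `0, 1` and `2, 3`),
and a Bell pair satisfies `(M ⊗ 1)|Φ⟩ = (1 ⊗ Mᵀ)|Φ⟩`. The conjugated Pauli matrices on contours 2 and 4 are the transposes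
of those on contours 1 and 3 (Pauli matrices are Hermitian), so `τ_b^α |id⟩⟩ = τ_{b'}^α |id⟩⟩`
when `b'` is the partner of `b` in its Bell pair. Hence each bond term of `H_eff`, applied to
`|id⟩⟩^{⊗N}`, does not change when `b` is replaced by its partner, while the sign `(-1)^{a+b}`
flips: the signed sum over `b` cancels.
-/

section ProductState

variable {ι S : Type*} [Fintype ι] [DecidableEq ι]

def prodState (φ : ι → S → ℂ) : (ι → S) → ℂ :=
  fun f => ∏ k, φ k (f k)

lemma prodState_update_apply (φ : ι → S → ℂ) (i : ι) (ψ : S → ℂ) (f : ι → S) :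
    prodState (Function.update φ i ψ) f = ψ (f i) * ∏ k ∈ univ.erase i, φ k (f k) := by
  rw [prodState, ← Finset.mul_prod_erase _ _ (mem_univ i), Function.update_self]
  congr 1
  refine Finset.prod_congr rfl fun k hk => ?_
  rw [Function.update_of_ne (Finset.ne_of_mem_erase hk)]

lemma prodState_apply_update (φ : ι → S → ℂ) (i : ι) (s : S) (f : ι → S) :
    prodState φ (Function.update f i s) = φ i s * ∏ k ∈ univ.erase i, φ k (f k) := by
  rw [prodState, ← Finset.mul_prod_erase _ _ (mem_univ i), Function.update_self]
  congr 1
  refine Finset.prod_congr rfl fun k hk => ?_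
  rw [Function.update_of_ne (Finset.ne_of_mem_erase hk)]

lemma prodState_update_sum {κ : Type*} (t : Finset κ) (φ : ι → S → ℂ) (i : ι)
    (ψ : κ → S → ℂ) :
    prodState (Function.update φ i (∑ s ∈ t, ψ s)) =
      ∑ s ∈ t, prodState (Function.update φ i (ψ s)) := by
  funext f
  simp only [prodState_update_apply, Finset.sum_apply, Finset.sum_mul]

end ProductState

lemma update_update_apply_eq_ite {ι κ X : Type*} [DecidableEq ι] [DecidableEq κ]
    (f : ι → κ → X) (i k : ι) (a c : κ) (x : X) :
    Function.update f i (Function.update (f i) a x) k c = if k = i ∧ c = a then x else f k c := by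
  by_cases hk : k = i
  · subst hk; by_cases hc : c = a <;> simp [hc]
  · simp [hk]

lemma sum_fin_four_neg_one_pow_smul_eq_zero {R M : Type*} [Ring R] [AddCommGroup M]
    [Module R M] (g : Fin 4 → M) (h10 : g 1 = g 0) (h32 : g 3 = g 2) :
    ∑ b : Fin 4, (-1 : R) ^ (b : ℕ) • g b = 0 := by
  norm_num [Fin.sum_univ_four, h10, h32]

def qubitOp {ι : Type*} [DecidableEq ι] (p : ι) (M : Matrix (Fin 2) (Fin 2) ℂ)
    (v : (ι → Fin 2) → ℂ) : (ι → Fin 2) → ℂ :=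
  fun x => ∑ j, M (x p) j * v (Function.update x p j)

lemma qubitOp_one_transpose_idS (M : Matrix (Fin 2) (Fin 2) ℂ) :
    qubitOp 1 Mᵀ idS = qubitOp 0 M idS := by
  funext x
  simp [qubitOp, idS, ite_and, eq_comm]

lemma qubitOp_three_transpose_idS (M : Matrix (Fin 2) (Fin 2) ℂ) :
    qubitOp 3 Mᵀ idS = qubitOp 2 M idS := by
  funext x
  simp [qubitOp, idS, ite_and, eq_comm]

lemma pauli_isHermitian (α : Fin 3) : (pauli α).IsHermitian := by
  fin_cases α <;> ext i j <;> fin_cases i <;> fin_cases j <;> simp [pauli]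

lemma pauliC_one (α : Fin 3) : pauliC 1 α = (pauliC 0 α)ᵀ := by
  ext i j
  simp [pauliC, ← (pauli_isHermitian α).apply i j]

lemma pauliC_three (α : Fin 3) : pauliC 3 α = (pauliC 2 α)ᵀ := by
  ext i j
  simp [pauliC, ← (pauli_isHermitian α).apply i j]

/-- `Σ_α τ_a^α τ_b^α` on a single site. -/
def pairOp (a b : Fin 4) (v : (Fin 4 → Fin 2) → ℂ) : (Fin 4 → Fin 2) → ℂ :=
  ∑ α : Fin 3, qubitOp a (pauliC a α) (qubitOp b (pauliC b α) v)

lemma pairOp_one_idS (a : Fin 4) : pairOp a 1 idS = pairOp a 0 idS := by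
  simp only [pairOp, pauliC_one, qubitOp_one_transpose_idS]

lemma pairOp_three_idS (a : Fin 4) : pairOp a 3 idS = pairOp a 2 idS := by
  simp only [pairOp, pauliC_three, qubitOp_three_transpose_idS]

section Chain

variable {N : ℕ}

lemma tau_apply (i : Fin N) (a : Fin 4) (α : Fin 3) (f g : RepIdx N) :
    tau N i a α f g = if g = Function.update f i (Function.update (f i) a (g i a))
      then pauliC a α (f i a) (g i a) else 0 := by
  have hsupp : (∀ p ∈ (univ : Finset (Fin N × Fin 4)).erase (i, a), f p.1 p.2 = g p.1 p.2) ↔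
      g = Function.update f i (Function.update (f i) a (g i a)) := by
    constructor
    · intro h
      funext k c
      rw [update_update_apply_eq_ite]
      split_ifs with hkc
      · rw [hkc.1, hkc.2]
      · exact (h (k, c) (Finset.mem_erase.mpr ⟨fun h' => hkc (Prod.ext_iff.mp h'), mem_univ _⟩)).symm
    · intro h p hp
      rw [h, update_update_apply_eq_ite,
        if_neg fun h' => Finset.ne_of_mem_erase hp (Prod.ext h'.1 h'.2)]
  simp only [tau, Matrix.of_apply, Finset.prod_boole, hsupp, mul_ite, mul_one, mul_zero]

lemma tau_mulVec_apply (i : Fin N) (a : Fin 4) (α : Fin 3) (v : RepIdx N → ℂ) (f : RepIdx N) :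
    (tau N i a α *ᵥ v) f =
      ∑ j, pauliC a α (f i a) j * v (Function.update f i (Function.update (f i) a j)) := by
  rw [Matrix.mulVec, dotProduct, ← Finset.sum_fiberwise univ (fun g : RepIdx N => g i a)]
  refine Finset.sum_congr rfl fun j _ => ?_
  calc ∑ g ∈ univ with g i a = j, tau N i a α f g * v g
      = ∑ g ∈ univ with g i a = j, if g = Function.update f i (Function.update (f i) a j)
          then pauliC a α (f i a) j * v g else 0 := by
        refine Finset.sum_congr rfl fun g hg => ?_
        obtain rfl := (Finset.mem_filter.mp hg).2
        rw [tau_apply, ite_mul, zero_mul]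
    _ = _ := by
        rw [Finset.sum_ite_eq', if_pos (by simp)]

lemma tau_mulVec_prodState (i : Fin N) (a : Fin 4) (α : Fin 3)
    (φ : Fin N → (Fin 4 → Fin 2) → ℂ) :
    tau N i a α *ᵥ prodState φ =
      prodState (Function.update φ i (qubitOp a (pauliC a α) (φ i))) := by
  funext f
  simp only [tau_mulVec_apply, prodState_apply_update, prodState_update_apply, qubitOp,
    ← mul_assoc, ← Finset.sum_mul]

lemma pair_mulVec_prodState (i : Fin N) (a b : Fin 4) (φ : Fin N → (Fin 4 → Fin 2) → ℂ) :
    (∑ α : Fin 3, tau N i a α * tau N i b α) *ᵥ prodState φ =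
      prodState (Function.update φ i (pairOp a b (φ i))) := by
  simp only [Matrix.sum_mulVec, ← Matrix.mulVec_mulVec, tau_mulVec_prodState,
    Function.update_idem, Function.update_self]
  rw [pairOp, prodState_update_sum]

lemma idN_eq_prodState : idN N = prodState fun _ => idS := rfl

lemma bond_mulVec_idN {i i' : Fin N} (hne : i ≠ i') :
    (∑ a : Fin 4, ∑ b : Fin 4, ((-1 : ℂ) ^ ((a : ℕ) + (b : ℕ))) •
      ((∑ α : Fin 3, tau N i a α * tau N i b α) *
       (∑ β : Fin 3, tau N i' a β * tau N i' b β))) *ᵥ idN N = 0 := by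
  have hbond : ∀ a b : Fin 4, ((∑ α : Fin 3, tau N i a α * tau N i b α) *
      (∑ β : Fin 3, tau N i' a β * tau N i' b β)) *ᵥ idN N =
      prodState (Function.update (Function.update (fun _ => idS) i' (pairOp a b idS)) i
        (pairOp a b idS)) := by
    intro a b
    rw [← Matrix.mulVec_mulVec, idN_eq_prodState, pair_mulVec_prodState,
      pair_mulVec_prodState, Function.update_of_ne hne]
  simp only [Matrix.sum_mulVec, Matrix.smul_mulVec, hbond, pow_add, mul_smul, ← Finset.smul_sum]
  refine Finset.sum_eq_zero fun a _ => ?_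
  rw [sum_fin_four_neg_one_pow_smul_eq_zero _ (by rw [pairOp_one_idS]) (by rw [pairOp_three_idS]),
    smul_zero]

end Chain

theorem stmt3_general (N : ℕ) (J : ℝ) :
    (Heff N J).mulVec (idN N) = 0 := by
  rw [Heff, Matrix.smul_mulVec, Matrix.sum_mulVec, Finset.sum_eq_zero, smul_zero]
  intro i _
  split_ifs with h
  · exact bond_mulVec_idN fun hi => by simpa using congrArg Fin.val hi
  · exact Matrix.zero_mulVec _

/-- `H_eff` annihilates `|id⟩⟩^{⊗N}`. -/
theorem stmt3 (N : ℕ) (J : ℝ) (hJ : 0 < J) :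
    (Heff N J).mulVec (idN N) = 0 :=
  stmt3_general N J
end
end

section
/- Let d_A = d_R·d_B, let U be a d_A×d_A unitary, and let {E_m}_{m=1}^{d_E} be d_A×d_A matrices with Σ_m E_m†E_m = I. Set |φ_i⟩ = U(|i⟩⊗|0⟩) ∈ ℂ^{d_A} for i=1,…,d_R, and define the pure state |Ψ'⟩ = (1/√d_R) Σ_{i=1}^{d_R} Σ_{m=1}^{d_E} |i⟩ ⊗ (E_m|φ_i⟩) ⊗ |m⟩ in ℂ^{d_R}⊗ℂ^{d_A}⊗ℂ^{d_E}, with reduced density matrices ρ'_{RE} = Tr_A |Ψ'⟩⟨Ψ'|, ρ'_R = Tr_{AE} |Ψ'⟩⟨Ψ'|, ρ'_E = Tr_{RA} |Ψ'⟩⟨Ψ'|. Then the mutual purity 𝓕 = Tr(ρ'_{RE}²) − Tr(ρ'_R²)·Tr(ρ'_E²) equals the replica amplitude 𝓕 = (1/d_R²) ⟨ I_{d_A} , (Σ_{m,n=1}^{d_E} E_m⊗Ē_n⊗E_n⊗Ē_m)(U⊗Ū⊗U⊗Ū) v ⟩, where |I_{d_A}⟩ = Σ_{p,q=1}^{d_A}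 |p⟩⊗|p⟩⊗|q⟩⊗|q⟩, v = Σ_{i,j=1}^{d_R} ( |i0⟩⊗|j0⟩⊗|j0⟩⊗|i0⟩ − (1/d_R)|i0⟩⊗|i0⟩⊗|j0⟩⊗|j0⟩ ) with |i0⟩ = |i⟩⊗|0⟩ ∈ ℂ^{d_A}, overbars denote entrywise complex conjugation, and ⊗ between matrices is the Kronecker product. -/
/-! STATEMENT 16: the mutual purity 𝓕 = Tr(ρ'_{RE}²) − Tr(ρ'_R²)Tr(ρ'_E²) of the
noise-affected maximally entangled encoded state equals the four-contour replica amplitude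
(1/d_R²)⟨I_{d_A}, (Σ_{m,n} E_m⊗Ē_n⊗E_n⊗Ē_m)(U⊗Ū⊗U⊗Ū) v⟩. -/

open Matrix
open scoped Kronecker

noncomputable section

variable (dR dB dE : ℕ)

/-- The system `A` has dimension `d_A = d_R·d_B`, with basis indexed by pairs. -/
abbrev AIdx (dR dB : ℕ) := Fin dR × Fin dB

/-- The global state `|Ψ'⟩ = (1/√d_R) Σ_{i,m} |i⟩ ⊗ (E_m U(|i⟩⊗|0⟩)) ⊗ |m⟩` on `R ⊗ A ⊗ E`. -/
def psi' (hB : 1 ≤ dB) (U : Matrix (AIdx dR dB) (AIdx dR dB) ℂ)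
    (E : Fin dE → Matrix (AIdx dR dB) (AIdx dR dB) ℂ) :
    Fin dR × AIdx dR dB × Fin dE → ℂ :=
  fun x =>
    ((Real.sqrt dR : ℝ) : ℂ)⁻¹ *
      ((E x.2.2).mulVec (U.mulVec fun p => if p = (x.1, ⟨0, hB⟩) then 1 else 0)) x.2.1

/-- The reduced density matrix `ρ'_{RE} = Tr_A |Ψ'⟩⟨Ψ'|`. -/
def rhoRE (hB : 1 ≤ dB) (U : Matrix (AIdx dR dB) (AIdx dR dB) ℂ)
    (E : Fin dE → Matrix (AIdx dR dB) (AIdx dR dB) ℂ) :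
    Matrix (Fin dR × Fin dE) (Fin dR × Fin dE) ℂ :=
  Matrix.of fun x y => ∑ a : AIdx dR dB,
    psi' dR dB dE hB U E (x.1, a, x.2) * star (psi' dR dB dE hB U E (y.1, a, y.2))

/-- The reduced density matrix `ρ'_R = Tr_{AE} |Ψ'⟩⟨Ψ'|`. -/
def rhoR (hB : 1 ≤ dB) (U : Matrix (AIdx dR dB) (AIdx dR dB) ℂ)
    (E : Fin dE → Matrix (AIdx dR dB) (AIdx dR dB) ℂ) :
    Matrix (Fin dR) (Fin dR) ℂ :=
  Matrix.of fun i j => ∑ a : AIdx dR dB, ∑ m : Fin dE,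
    psi' dR dB dE hB U E (i, a, m) * star (psi' dR dB dE hB U E (j, a, m))

/-- The reduced density matrix `ρ'_E = Tr_{RA} |Ψ'⟩⟨Ψ'|`. -/
def rhoE (hB : 1 ≤ dB) (U : Matrix (AIdx dR dB) (AIdx dR dB) ℂ)
    (E : Fin dE → Matrix (AIdx dR dB) (AIdx dR dB) ℂ) :
    Matrix (Fin dE) (Fin dE) ℂ :=
  Matrix.of fun m n => ∑ i : Fin dR, ∑ a : AIdx dR dB,
    psi' dR dB dE hB U E (i, a, m) * star (psi' dR dB dE hB U E (i, a, n))

/-- The boundary vector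
`v = Σ_{i,j} (|i0⟩⊗|j0⟩⊗|j0⟩⊗|i0⟩ − (1/d_R)|i0⟩⊗|i0⟩⊗|j0⟩⊗|j0⟩)` in `(ℂ^{d_A})^{⊗4}`. -/
def vIn (hB : 1 ≤ dB) :
    ((AIdx dR dB × AIdx dR dB) × AIdx dR dB) × AIdx dR dB → ℂ :=
  fun x => ∑ i : Fin dR, ∑ j : Fin dR,
    ((if x = ((((i, ⟨0, hB⟩), (j, ⟨0, hB⟩)), (j, ⟨0, hB⟩)), (i, ⟨0, hB⟩)) then (1 : ℂ) else 0) -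
      ((dR : ℂ))⁻¹ *
        (if x = ((((i, ⟨0, hB⟩), (i, ⟨0, hB⟩)), (j, ⟨0, hB⟩)), (j, ⟨0, hB⟩)) then (1 : ℂ) else 0))

/-!
Put `K_m = E_m U` and let `G_{mn}` be the compression of `K_n† K_m` to the code space spanned by
the `|i0⟩`. Every amplitude of `|Ψ'⟩` is an entry of some `K_m`, so `ρ'_{RE}` has entries
`G_{mn}(j, i)/d_R` and `ρ'_E` has entries `tr G_{mn}/d_R`, while `ρ'_R = 1/d_R` because
`Σ_m K_m† K_m = U† (Σ_m E_m† E_m) U = 1`. On the replica side, `⟨I_{d_A}|` contracts contour 1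
with 2 and 3 with 4, giving
`⟨I_{d_A}| K_m ⊗ K̄_n ⊗ K_n ⊗ K̄_m |x, y, z, w⟩ = (K_n† K_m)(y, x) (K_m† K_n)(w, z)`,
and the two terms of `v` reproduce `Σ G_{mn}(j, i) G_{nm}(i, j)` and `Σ tr G_{mn} tr G_{nm}`.
-/

theorem Finset.sum_sum_comm_sum_sum {α β γ δ M : Type*} [Fintype α] [Fintype β] [Fintype γ]
    [Fintype δ] [AddCommMonoid M] (f : α → β → γ → δ → M) :
    ∑ a, ∑ b, ∑ c, ∑ d, f a b c d = ∑ c, ∑ d, ∑ a, ∑ b, f a b c d := by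
  refine (Finset.sum_congr rfl fun a _ => Finset.sum_comm).trans ?_
  refine Finset.sum_comm.trans (Finset.sum_congr rfl fun c _ => ?_)
  exact (Finset.sum_congr rfl fun a _ => Finset.sum_comm).trans Finset.sum_comm

theorem sum_conjTranspose_mul_self_mul_unitary {ι n α : Type*} [Fintype ι] [Fintype n]
    [DecidableEq n] [CommRing α] [StarRing α] {U : Matrix n n α}
    (hU : U ∈ Matrix.unitaryGroup n α) {E : ι → Matrix n n α} (hE : ∑ m, (E m)ᴴ * E m = 1) :
    ∑ m, (E m * U)ᴴ * (E m * U) = 1 := by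
  have hK : ∀ m, (E m * U)ᴴ * (E m * U) = Uᴴ * ((E m)ᴴ * E m) * U := fun m => by
    rw [conjTranspose_mul]; noncomm_ring
  simp_rw [hK, ← Finset.sum_mul, ← Finset.mul_sum, hE, mul_one, ← star_eq_conjTranspose]
  exact hU.1

theorem sum_kronecker_conj_diag_apply {m n α : Type*} [Fintype m] [CommSemiring α] [StarRing α]
    (A B C D : Matrix m n α) (x y z w : n) :
    ∑ p, ∑ q, (A ⊗ₖ B.map (starRingEnd α) ⊗ₖ C ⊗ₖ D.map (starRingEnd α))
        (((p, p), q), q) (((x, y), z), w) = (Bᴴ * A) y x * (Dᴴ * C) w z := by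
  simp only [kroneckerMap_apply, map_apply, mul_apply, conjTranspose_apply, starRingEnd_apply,
    Finset.sum_mul_sum]
  exact Finset.sum_congr rfl fun p _ => Finset.sum_congr rfl fun q _ => by ring

section

variable {dR dB dE : ℕ} (hB : 1 ≤ dB) (U : Matrix (AIdx dR dB) (AIdx dR dB) ℂ)
  (E : Fin dE → Matrix (AIdx dR dB) (AIdx dR dB) ℂ)

def codeIncl (i : Fin dR) : AIdx dR dB := (i, ⟨0, hB⟩)

def codeGram (m n : Fin dE) : Matrix (Fin dR) (Fin dR) ℂ :=
  ((E n * U)ᴴ * (E m * U)).submatrix (codeIncl hB) (codeIncl hB)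

theorem codeGram_apply (m n : Fin dE) (i j : Fin dR) :
    codeGram hB U E m n i j = ((E n * U)ᴴ * (E m * U)) (codeIncl hB i) (codeIncl hB j) :=
  rfl

theorem sum_codeGram_self (hU : U ∈ Matrix.unitaryGroup (AIdx dR dB) ℂ)
    (hE : ∑ m, (E m)ᴴ * E m = 1) :
    ∑ m, codeGram hB U E m m = 1 := by
  ext i j
  rw [Matrix.sum_apply]
  simp only [codeGram_apply]
  rw [← Matrix.sum_apply, sum_conjTranspose_mul_self_mul_unitary hU hE]
  simp [one_apply, codeIncl]

theorem psi'_apply (i : Fin dR) (a : AIdx dR dB) (m : Fin dE) :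
    psi' dR dB dE hB U E (i, a, m) = ((Real.sqrt dR : ℝ) : ℂ)⁻¹ * (E m * U) a (codeIncl hB i) := by
  have hbasis : (fun p : AIdx dR dB => if p = (i, ⟨0, hB⟩) then (1 : ℂ) else 0)
      = Pi.single (codeIncl hB i) 1 := by
    funext p; simp [Pi.single_apply, codeIncl]
  simp only [psi', hbasis]
  rw [mulVec_mulVec, mulVec_single_one, col_apply]

theorem sum_psi'_mul_star (i j : Fin dR) (m n : Fin dE) :
    ∑ a, psi' dR dB dE hB U E (i, a, m) * star (psi' dR dB dE hB U E (j, a, n))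
      = (dR : ℂ)⁻¹ * codeGram hB U E m n j i := by
  have hnorm : ((Real.sqrt dR : ℝ) : ℂ)⁻¹ * star ((Real.sqrt dR : ℝ) : ℂ)⁻¹ = (dR : ℂ)⁻¹ := by
    rw [star_inv₀, Complex.star_def, Complex.conj_ofReal, ← mul_inv, ← Complex.ofReal_mul,
      Real.mul_self_sqrt (Nat.cast_nonneg dR), Complex.ofReal_natCast]
  rw [codeGram_apply, mul_apply, Finset.mul_sum]
  refine Finset.sum_congr rfl fun a _ => ?_
  rw [psi'_apply, psi'_apply, star_mul', conjTranspose_apply, ← hnorm]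
  ring

theorem rhoR_eq (hU : U ∈ Matrix.unitaryGroup (AIdx dR dB) ℂ)
    (hE : ∑ m, (E m)ᴴ * E m = 1) :
    rhoR dR dB dE hB U E = (dR : ℂ)⁻¹ • 1 := by
  ext i j
  rw [rhoR, of_apply, Finset.sum_comm]
  simp only [sum_psi'_mul_star, ← Finset.mul_sum, ← Matrix.sum_apply,
    sum_codeGram_self hB U E hU hE, Matrix.smul_apply, one_apply, smul_eq_mul, eq_comm]

theorem trace_rhoR_mul_self (hU : U ∈ Matrix.unitaryGroup (AIdx dR dB) ℂ)
    (hE : ∑ m, (E m)ᴴ * E m = 1) :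
    (rhoR dR dB dE hB U E * rhoR dR dB dE hB U E).trace = (dR : ℂ)⁻¹ := by
  rw [rhoR_eq hB U E hU hE, smul_mul_smul, one_mul, trace_smul, trace_one, Fintype.card_fin,
    smul_eq_mul]
  simpa using mul_self_mul_inv (dR : ℂ)⁻¹

theorem trace_rhoRE_mul_self :
    (rhoRE dR dB dE hB U E * rhoRE dR dB dE hB U E).trace = ((dR : ℂ)⁻¹) ^ 2 *
      ∑ m, ∑ n, ∑ i, ∑ j, codeGram hB U E m n j i * codeGram hB U E n m i j := by
  simp only [trace, diag_apply, mul_apply, rhoRE, of_apply, sum_psi'_mul_star]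
  simp only [Fintype.sum_prod_type_right, Finset.mul_sum]
  refine Finset.sum_congr rfl fun m _ => Finset.sum_comm.trans <|
    Finset.sum_congr rfl fun n _ => Finset.sum_congr rfl fun i _ =>
      Finset.sum_congr rfl fun j _ => by ring

theorem trace_rhoE_mul_self :
    (rhoE dR dB dE hB U E * rhoE dR dB dE hB U E).trace = ((dR : ℂ)⁻¹) ^ 2 *
      ∑ m, ∑ n, (codeGram hB U E m n).trace * (codeGram hB U E n m).trace := by
  simp only [trace, diag_apply, mul_apply, rhoE, of_apply, sum_psi'_mul_star, ← Finset.mul_sum]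
  rw [Finset.mul_sum]
  refine Finset.sum_congr rfl fun m _ => ?_
  rw [Finset.mul_sum]
  exact Finset.sum_congr rfl fun n _ => by ring

theorem dotProduct_vIn (f : ((AIdx dR dB × AIdx dR dB) × AIdx dR dB) × AIdx dR dB → ℂ) :
    f ⬝ᵥ vIn dR dB hB = ∑ i, ∑ j,
      (f (((codeIncl hB i, codeIncl hB j), codeIncl hB j), codeIncl hB i) -
        (dR : ℂ)⁻¹ * f (((codeIncl hB i, codeIncl hB i), codeIncl hB j), codeIncl hB j)) := by
  have hv : vIn dR dB hB = ∑ i, ∑ j,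
      (Pi.single (((codeIncl hB i, codeIncl hB j), codeIncl hB j), codeIncl hB i) 1 -
        (dR : ℂ)⁻¹ •
          Pi.single (((codeIncl hB i, codeIncl hB i), codeIncl hB j), codeIncl hB j) 1) := by
    funext x
    simp only [vIn, codeIncl, Finset.sum_apply, Pi.sub_apply, Pi.smul_apply, Pi.single_apply,
      smul_eq_mul]
  simp only [hv, dotProduct_sum, dotProduct_sub, dotProduct_smul, dotProduct_single_one,
    smul_eq_mul]

theorem sum_diag_kronecker_conj_mulVec_vIn (A B C D : Matrix (AIdx dR dB) (AIdx dR dB) ℂ) :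
    ∑ p, ∑ q, ((A ⊗ₖ B.map (starRingEnd ℂ) ⊗ₖ C ⊗ₖ D.map (starRingEnd ℂ)) *ᵥ vIn dR dB hB)
        (((p, p), q), q)
      = ∑ i, ∑ j,
        ((Bᴴ * A) (codeIncl hB j) (codeIncl hB i) * (Dᴴ * C) (codeIncl hB i) (codeIncl hB j) -
          (dR : ℂ)⁻¹ * ((Bᴴ * A) (codeIncl hB i) (codeIncl hB i) *
            (Dᴴ * C) (codeIncl hB j) (codeIncl hB j))) := by
  simp only [mulVec, ← sum_dotProduct]
  rw [dotProduct_vIn]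
  simp only [Finset.sum_apply, sum_kronecker_conj_diag_apply]

theorem replica_amplitude_eq :
    ∑ p, ∑ q, (((∑ m : Fin dE, ∑ n : Fin dE,
          E m ⊗ₖ (E n).map (starRingEnd ℂ) ⊗ₖ E n ⊗ₖ (E m).map (starRingEnd ℂ)) *
        (U ⊗ₖ U.map (starRingEnd ℂ) ⊗ₖ U ⊗ₖ U.map (starRingEnd ℂ))) *ᵥ vIn dR dB hB)
          (((p, p), q), q)
      = ∑ m, ∑ n, ∑ i, ∑ j, codeGram hB U E m n j i * codeGram hB U E n m i j -
        (dR : ℂ)⁻¹ * ∑ m, ∑ n, (codeGram hB U E m n).trace * (codeGram hB U E n m).trace := by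
  have hmixed : ∀ m n, (E m ⊗ₖ (E n).map (starRingEnd ℂ) ⊗ₖ E n ⊗ₖ (E m).map (starRingEnd ℂ)) *
      (U ⊗ₖ U.map (starRingEnd ℂ) ⊗ₖ U ⊗ₖ U.map (starRingEnd ℂ))
      = (E m * U) ⊗ₖ (E n * U).map (starRingEnd ℂ) ⊗ₖ (E n * U) ⊗ₖ
          (E m * U).map (starRingEnd ℂ) := fun m n => by
    simp only [← mul_kronecker_mul, Matrix.map_mul]
  simp only [Finset.sum_mul, hmixed, sum_mulVec, Finset.sum_apply]
  rw [Finset.sum_sum_comm_sum_sum]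
  simp only [sum_diag_kronecker_conj_mulVec_vIn, ← codeGram_apply, Finset.sum_sub_distrib,
    ← Finset.mul_sum, trace, diag_apply, Finset.sum_mul_sum]

end

/-- for a unitary `U` on `ℂ^{d_A}` (`d_A = d_R·d_B`) and Kraus operators
`{E_m}` with `Σ_m E_m†E_m = 1`, the mutual purity of
`|Ψ'⟩ = (1/√d_R) Σ_{i,m} |i⟩⊗(E_m|φ_i⟩)⊗|m⟩`, `|φ_i⟩ = U(|i⟩⊗|0⟩)`, satisfies
`Tr(ρ'_{RE}²) − Tr(ρ'_R²)·Tr(ρ'_E²)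
  = (1/d_R²) ⟨I_{d_A}, (Σ_{m,n} E_m⊗Ē_n⊗E_n⊗Ē_m)(U⊗Ū⊗U⊗Ū) v⟩`,
where `⟨I_{d_A}, w⟩ = Σ_{p,q} w(p,p,q,q)`. -/
theorem stmt16 (hB : 1 ≤ dB) (U : Matrix (AIdx dR dB) (AIdx dR dB) ℂ)
    (hU : U ∈ Matrix.unitaryGroup (AIdx dR dB) ℂ)
    (E : Fin dE → Matrix (AIdx dR dB) (AIdx dR dB) ℂ)
    (hE : ∑ m : Fin dE, (E m)ᴴ * E m = 1) :
    (rhoRE dR dB dE hB U E * rhoRE dR dB dE hB U E).trace -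
        (rhoR dR dB dE hB U E * rhoR dR dB dE hB U E).trace *
          (rhoE dR dB dE hB U E * rhoE dR dB dE hB U E).trace =
      ((dR : ℂ) ^ 2)⁻¹ *
        ∑ p : AIdx dR dB, ∑ q : AIdx dR dB,
          (((∑ m : Fin dE, ∑ n : Fin dE,
                E m ⊗ₖ (E n).map (starRingEnd ℂ) ⊗ₖ E n ⊗ₖ (E m).map (starRingEnd ℂ)) *
              (U ⊗ₖ U.map (starRingEnd ℂ) ⊗ₖ U ⊗ₖ U.map (starRingEnd ℂ))).mulVec
            (vIn dR dB hB)) (((p, p), q), q) := by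
  rw [trace_rhoRE_mul_self, trace_rhoR_mul_self hB U E hU hE, trace_rhoE_mul_self,
    replica_amplitude_eq]
  ring

end
end
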